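/- Let n be a positive integer and let K_n □ K_n be the n by n rook's graph, with vertex set {1,…,n} × {1,…,n} and (i,j) adjacent to (k,ℓ) if and only if (i,j) ≠ (k,ℓ) and (i = k or j = ℓ). A set M of vertices of K_n □ K_n is a minimal dominating set if and only if M contains exactly one vertex in every row (i.e., for each i there is exactly one j with (i,j) ∈ M) or M contains exactly one vertex in every column (i.e., for each j there is exactly one i with (i,j) ∈ M). -/

import Mathlib

/-- `S` is a dominating set of `G`: every vertex is in `S` or adjacent to a vertex of `S`. -/
def IsDomSet {V : Type*} (G : SimpleGraph V) (S : Set V) : Prop :=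
  ∀ v : V, v ∈ S ∨ ∃ u ∈ S, G.Adj v u

/-- `S` is a minimal dominating set of `G`. -/
def IsMinDomSet {V : Type*} (G : SimpleGraph V) (S : Set V) : Prop :=
  IsDomSet G S ∧ ∀ v ∈ S, ¬ IsDomSet G (S \ {v})

/-- The expansion/contraction reconfiguration rule. -/
def ReconfigAdj {V : Type*} (G : SimpleGraph V) (M₁ M₂ : Set V) : Prop :=
  ∃ v : V, (M₂ \ M₁ = {v} ∧ M₁ \ M₂ ⊆ G.neighborSet v) ∨
           (M₁ \ M₂ = {v} ∧ M₂ \ M₁ ⊆ G.neighborSet v)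

/-- The reconfiguration graph `R(G)` of minimal dominating sets of `G`. -/
def ReconfigGraph {V : Type*} (G : SimpleGraph V) :
    SimpleGraph {S : Set V // IsMinDomSet G S} where
  Adj M₁ M₂ := M₁ ≠ M₂ ∧ ReconfigAdj G M₁.1 M₂.1
  symm := ⟨by
    rintro M₁ M₂ ⟨hne, v, h⟩
    exact ⟨hne.symm, v, h.symm⟩⟩
  loopless := ⟨by rintro M ⟨hne, _⟩; exact hne rfl⟩

private lemma rook_adj {n : ℕ} (x y : Fin n × Fin n) :
    ((⊤ : SimpleGraph (Fin n)) □ (⊤ : SimpleGraph (Fin n))).Adj x y ↔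
      (x.1 ≠ y.1 ∧ x.2 = y.2) ∨ (x.2 ≠ y.2 ∧ x.1 = y.1) := by
  simp [SimpleGraph.boxProd_adj]

private lemma not_dom {n : ℕ} {S : Set (Fin n × Fin n)}
    (h : ¬ IsDomSet ((⊤ : SimpleGraph (Fin n)) □ (⊤ : SimpleGraph (Fin n))) S) :
    ∃ w, w ∉ S ∧ ∀ u ∈ S, ¬ ((⊤ : SimpleGraph (Fin n)) □ (⊤ : SimpleGraph (Fin n))).Adj w u := by
  unfold IsDomSet at h
  push_neg at h
  exact h

private lemma aux_row {n : ℕ} {M : Set (Fin n × Fin n)}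
    (hmin : ∀ v ∈ M, ¬ IsDomSet ((⊤ : SimpleGraph (Fin n)) □ (⊤ : SimpleGraph (Fin n))) (M \ {v}))
    (hall : ∀ i : Fin n, ∃ j : Fin n, (i, j) ∈ M) :
    ∀ i : Fin n, ∃! j : Fin n, (i, j) ∈ M := by
  intro i
  obtain ⟨j₁, hj₁⟩ := hall i
  refine ⟨j₁, hj₁, fun j₂ hj₂ => ?_⟩
  by_contra hne
  obtain ⟨⟨a, b⟩, hw1, hw2⟩ := not_dom (hmin (i, j₂) hj₂)
  obtain ⟨c, hc⟩ := hall a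
  by_cases hwv : (a, b) = (i, j₂)
  · obtain ⟨ha, hb⟩ := Prod.mk.injEq .. ▸ hwv
    subst ha; subst hb
    have h1 : (a, j₁) ∈ M \ {(a, b)} := ⟨hj₁, by simp [Prod.ext_iff]; exact fun h => hne h.symm⟩
    exact hw2 (a, j₁) h1 ((rook_adj _ _).2 (Or.inr ⟨fun h => hne h, rfl⟩))
  · have hwM : (a, b) ∉ M := fun h => hw1 ⟨h, hwv⟩
    by_cases hcv : (a, c) = (i, j₂)
    · obtain ⟨ha, hcj⟩ := Prod.mk.injEq .. ▸ hcv
      subst ha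
      have hbj₁ : b ≠ j₁ := fun h => hwM (h ▸ hj₁)
      have h1 : ((a : Fin n), j₁) ∈ M \ {(a, j₂)} :=
        ⟨hj₁, by simp [Prod.ext_iff]; exact fun h => hne h.symm⟩
      have := hw2 (a, j₁) (by rwa [← hcj] at h1 ⊢)
      exact this ((rook_adj _ _).2 (Or.inr ⟨hbj₁, rfl⟩))
    · have hcb : c ≠ b := fun h => hwM (by rwa [h] at hc)
      exact hw2 (a, c) ⟨hc, hcv⟩ ((rook_adj _ _).2 (Or.inr ⟨fun h => hcb h.symm, rfl⟩))

private lemma aux_col {n : ℕ} {M : Set (Fin n × Fin n)}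
    (hmin : ∀ v ∈ M, ¬ IsDomSet ((⊤ : SimpleGraph (Fin n)) □ (⊤ : SimpleGraph (Fin n))) (M \ {v}))
    (hall : ∀ j : Fin n, ∃ i : Fin n, (i, j) ∈ M) :
    ∀ j : Fin n, ∃! i : Fin n, (i, j) ∈ M := by
  intro j
  obtain ⟨i₁, hi₁⟩ := hall j
  refine ⟨i₁, hi₁, fun i₂ hi₂ => ?_⟩
  by_contra hne
  obtain ⟨⟨a, b⟩, hw1, hw2⟩ := not_dom (hmin (i₂, j) hi₂)
  obtain ⟨c, hc⟩ := hall b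
  by_cases hwv : (a, b) = (i₂, j)
  · obtain ⟨ha, hb⟩ := Prod.mk.injEq .. ▸ hwv
    subst ha; subst hb
    have h1 : (i₁, b) ∈ M \ {(a, b)} := ⟨hi₁, by simp [Prod.ext_iff]; exact fun h => hne h.symm⟩
    exact hw2 (i₁, b) h1 ((rook_adj _ _).2 (Or.inl ⟨fun h => hne h, rfl⟩))
  · have hwM : (a, b) ∉ M := fun h => hw1 ⟨h, hwv⟩
    by_cases hcv : (c, b) = (i₂, j)
    · obtain ⟨hcj, hb⟩ := Prod.mk.injEq .. ▸ hcv
      subst hb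
      have hai₁ : a ≠ i₁ := fun h => hwM (h ▸ hi₁)
      have h1 : (i₁, (b : Fin n)) ∈ M \ {(i₂, b)} :=
        ⟨hi₁, by simp [Prod.ext_iff]; exact fun h => hne h.symm⟩
      have := hw2 (i₁, b) h1
      exact this ((rook_adj _ _).2 (Or.inl ⟨hai₁, rfl⟩))
    · have hca : c ≠ a := fun h => hwM (by rwa [h] at hc)
      exact hw2 (c, b) ⟨hc, hcv⟩ ((rook_adj _ _).2 (Or.inl ⟨fun h => hca h.symm, rfl⟩))

private lemma row_min {n : ℕ} {M : Set (Fin n × Fin n)}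
    (h : ∀ i : Fin n, ∃! j : Fin n, (i, j) ∈ M) :
    IsMinDomSet ((⊤ : SimpleGraph (Fin n)) □ (⊤ : SimpleGraph (Fin n))) M := by
  classical
  set f : Fin n → Fin n := fun i => (h i).choose with hf
  have hfM : ∀ i, (i, f i) ∈ M := fun i => (h i).choose_spec.1
  have hmem : ∀ a b, (a, b) ∈ M ↔ b = f a := by
    intro a b
    exact ⟨fun hb => (h a).choose_spec.2 b hb, fun hb => hb ▸ hfM a⟩
  constructor
  · rintro ⟨a, b⟩
    by_cases hb : b = f a
    · exact Or.inl ((hmem a b).2 hb)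
    · exact Or.inr ⟨(a, f a), hfM a, (rook_adj _ _).2 (Or.inr ⟨hb, rfl⟩)⟩
  · rintro ⟨a, b⟩ hv hd
    have hb : b = f a := (hmem a b).1 hv
    subst hb
    by_cases hsurj : Function.Surjective f
    · have hinj : Function.Injective f := Finite.injective_iff_surjective.2 hsurj
      rcases hd (a, f a) with hmem' | ⟨⟨c, d⟩, ⟨huM, hune⟩, hadj⟩
      · exact hmem'.2 rfl
      · have hd' : d = f c := (hmem c d).1 huM
        subst hd'
        rcases (rook_adj _ _).1 hadj with ⟨h1, h2⟩ | ⟨h1, h2⟩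
        · exact h1 (hinj h2)
        · have h2' : a = c := h2
          exact hune (by simp [h2'])
    · simp only [Function.Surjective, not_forall] at hsurj
      obtain ⟨j₀, hj₀⟩ := hsurj
      push_neg at hj₀
      have hj₀a : j₀ ≠ f a := fun h => hj₀ a h.symm
      rcases hd (a, j₀) with hmem' | ⟨⟨c, d⟩, ⟨huM, hune⟩, hadj⟩
      · exact hj₀a ((hmem a j₀).1 hmem'.1)
      · have hd' : d = f c := (hmem c d).1 huM
        subst hd'
        rcases (rook_adj _ _).1 hadj with ⟨h1, h2⟩ | ⟨h1, h2⟩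
        · exact hj₀ c h2.symm
        · have h2' : a = c := h2
          exact hune (by simp [h2'])

private lemma col_min {n : ℕ} {M : Set (Fin n × Fin n)}
    (h : ∀ j : Fin n, ∃! i : Fin n, (i, j) ∈ M) :
    IsMinDomSet ((⊤ : SimpleGraph (Fin n)) □ (⊤ : SimpleGraph (Fin n))) M := by
  classical
  set f : Fin n → Fin n := fun j => (h j).choose with hf
  have hfM : ∀ j, (f j, j) ∈ M := fun j => (h j).choose_spec.1
  have hmem : ∀ a b, (a, b) ∈ M ↔ a = f b := by
    intro a b
    exact ⟨fun hb => (h b).choose_spec.2 a hb, fun hb => hb ▸ hfM b⟩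
  constructor
  · rintro ⟨a, b⟩
    by_cases ha : a = f b
    · exact Or.inl ((hmem a b).2 ha)
    · exact Or.inr ⟨(f b, b), hfM b, (rook_adj _ _).2 (Or.inl ⟨ha, rfl⟩)⟩
  · rintro ⟨a, b⟩ hv hd
    have ha : a = f b := (hmem a b).1 hv
    subst ha
    by_cases hsurj : Function.Surjective f
    · have hinj : Function.Injective f := Finite.injective_iff_surjective.2 hsurj
      rcases hd (f b, b) with hmem' | ⟨⟨c, d⟩, ⟨huM, hune⟩, hadj⟩
      · exact hmem'.2 rfl
      · have hc' : c = f d := (hmem c d).1 huM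
        subst hc'
        rcases (rook_adj _ _).1 hadj with ⟨h1, h2⟩ | ⟨h1, h2⟩
        · have h2' : b = d := h2
          exact h1 (congrArg f h2')
        · exact h1 (hinj h2)
    · simp only [Function.Surjective, not_forall] at hsurj
      obtain ⟨i₀, hi₀⟩ := hsurj
      push_neg at hi₀
      have hi₀a : i₀ ≠ f b := fun h => hi₀ b h.symm
      rcases hd (i₀, b) with hmem' | ⟨⟨c, d⟩, ⟨huM, hune⟩, hadj⟩
      · exact hi₀a ((hmem i₀ b).1 hmem'.1)
      · have hc' : c = f d := (hmem c d).1 huM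
        subst hc'
        rcases (rook_adj _ _).1 hadj with ⟨h1, h2⟩ | ⟨h1, h2⟩
        · have h2' : b = d := h2
          exact hune (by simp [h2'])
        · exact hi₀ d h2.symm

/-- The minimal dominating sets of the rook's graph K_n □ K_n are exactly the sets with
exactly one vertex in every row or exactly one vertex in every column. -/
theorem stmt7 (n : ℕ) (hn : 0 < n) (M : Set (Fin n × Fin n)) :
    IsMinDomSet ((⊤ : SimpleGraph (Fin n)) □ (⊤ : SimpleGraph (Fin n))) M ↔
      ((∀ i : Fin n, ∃! j : Fin n, (i, j) ∈ M) ∨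
        (∀ j : Fin n, ∃! i : Fin n, (i, j) ∈ M)) := by
  constructor
  · rintro ⟨hdom, hmin⟩
    have hRC : (∀ i : Fin n, ∃ j, (i, j) ∈ M) ∨ (∀ j : Fin n, ∃ i, (i, j) ∈ M) := by
      by_contra hcon
      push_neg at hcon
      obtain ⟨⟨i, hi⟩, ⟨j, hj⟩⟩ := hcon
      rcases hdom (i, j) with hm | ⟨⟨a, b⟩, hu, hadj⟩
      · exact hi j hm
      · rcases (rook_adj _ _).1 hadj with ⟨h1, h2⟩ | ⟨h1, h2⟩
        · have h2' : j = b := h2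
          exact hj a (by rw [h2']; exact hu)
        · have h2' : i = a := h2
          exact hi b (by rw [h2']; exact hu)
    rcases hRC with hR | hC
    · exact Or.inl (aux_row hmin hR)
    · exact Or.inr (aux_col hmin hC)
  · rintro (h | h)
    · exact row_min h
    · exact col_min h
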